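/- (Surrogate risk bound for classifiers.) Let $(Z,Y,W)$ satisfy the latent Gaussian mixture model with $Z\mid Y=k\sim N_K(\alpha_k,\Sigma_{Z|Y})$, $\mathbb{P}(Y=k)=\pi_k$, $W$ independent of $(Z,Y)$, and $X=AZ+W$. Let $G_z^*(z)=\log\frac{\pi_1 f_{Z|1}(z)}{\pi_0 f_{Z|0}(z)}$ and let $\widehat\Lambda:\mathbb{R}^p\to\mathbb{R}$ be any measurable function, defining the classifier $\widehat g(x) = \mathbbm{1}\{\widehat\Lambda(x)\ge 0\}$. Then for every $t>0$, $\mathbb{P}\{\widehat g(X)\ne Y\} - R_z^* \le \mathbb{P}\{|\widehat\Lambda(X)-G_z^*(Z)|>t\} + t\,\pi_0\,\mathbb{P}\{-t\le G_z^*(Z)<0\mid Y=0\} + t\,\pi_1\,\mathbb{P}\{0\le G_z^*(Z)\le t\mid Y=1\}$, where $R_z^* = \inf_h\mathbb{P}\{h(Z)\ne Y\}$. -/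

import Mathlib

open Matrix MeasureTheory ProbabilityTheory

/-- Density of the multivariate Gaussian `N_K(α, Σ)` with respect to Lebesgue measure. -/
noncomputable def mvGaussDensity {K : ℕ} (α : Fin K → ℝ) (S : Matrix (Fin K) (Fin K) ℝ)
    (z : Fin K → ℝ) : ℝ :=
  Real.exp (-(1 / 2) * ((z - α) ⬝ᵥ S⁻¹.mulVec (z - α)))
    / Real.sqrt ((2 * Real.pi) ^ K * S.det)

/-!
Compare the plug-in rule `{Λ̂ ≥ 0}` with the Bayes rule `{G ≥ 0}`, which is optimal because it
predicts the class of larger mass `π_k f_k`. The excess risk lives on the two regions where the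
rules disagree, and there it is the difference of the two class masses. Where `|Λ̂ - G| > t` we
pay the probability of that event. Elsewhere `Λ̂` and `G` have opposite signs but are `t`-close,
so `|G| ≤ t`: the class masses are within a factor `e^t` of each other, and the excess is at most
`1 - e^{-t} ≤ t` times the mass of `{|G| ≤ t}`. Independence of `W` and `(Z, Y)` carries the
comparison of densities in `z` over to events depending on `(Z, W)`.
-/

open Set
open scoped ENNReal

lemma mvGaussDensity_pos {K : ℕ} (α : Fin K → ℝ) {S : Matrix (Fin K) (Fin K) ℝ} (hS : S.PosDef)
    (z : Fin K → ℝ) : 0 < mvGaussDensity α S z := by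
  have := hS.det_pos
  unfold mvGaussDensity
  positivity

@[fun_prop]
lemma measurable_mvGaussDensity {K : ℕ} (α : Fin K → ℝ) (S : Matrix (Fin K) (Fin K) ℝ) :
    Measurable (mvGaussDensity α S) := by
  unfold mvGaussDensity
  fun_prop

lemma Real.le_exp_mul_of_neg_le_log_div {a b s : ℝ} (ha : 0 < a) (hb : 0 < b)
    (h : -s ≤ Real.log (b / a)) : a ≤ Real.exp s * b := by
  rw [Real.log_div hb.ne' ha.ne'] at h
  calc a = Real.exp (Real.log a) := (Real.exp_log ha).symm
    _ ≤ Real.exp (s + Real.log b) := Real.exp_le_exp.mpr (by linarith)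
    _ = Real.exp s * b := by rw [Real.exp_add, Real.exp_log hb]

lemma ENNReal.le_ofReal_mul_add_of_le_ofReal_exp_mul {a b m : ℝ≥0∞} {t : ℝ} (ht : 0 ≤ t)
    (hab : a ≤ ENNReal.ofReal (Real.exp t) * b) (ham : a ≤ m) :
    a ≤ ENNReal.ofReal t * m + b := by
  have hsplit : ENNReal.ofReal (Real.exp (-t)) + ENNReal.ofReal (1 - Real.exp (-t)) = 1 := by
    rw [← ENNReal.ofReal_add (Real.exp_pos _).le
      (sub_nonneg.mpr (Real.exp_le_one_iff.mpr (neg_nonpos.mpr ht)))]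
    simp
  have hb : ENNReal.ofReal (Real.exp (-t)) * a ≤ b :=
    calc ENNReal.ofReal (Real.exp (-t)) * a
        ≤ ENNReal.ofReal (Real.exp (-t)) * (ENNReal.ofReal (Real.exp t) * b) := by gcongr
      _ = b := by
        rw [← mul_assoc, ← ENNReal.ofReal_mul (Real.exp_pos _).le, ← Real.exp_add]
        simp
  have hm : ENNReal.ofReal (1 - Real.exp (-t)) * a ≤ ENNReal.ofReal t * m := by
    gcongr
    linarith [Real.add_one_le_exp (-t)]
  calc a = ENNReal.ofReal (Real.exp (-t)) * a + ENNReal.ofReal (1 - Real.exp (-t)) * a := by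
        rw [← add_mul, hsplit, one_mul]
    _ ≤ b + ENNReal.ofReal t * m := add_le_add hb hm
    _ = ENNReal.ofReal t * m + b := add_comm _ _

section Classification

variable {γ : Type*} [MeasurableSpace γ] {P0 P1 : Measure γ} {G : γ → ℝ}

/-- Risk of the rule predicting label `1` exactly on `S`, when `P₀`, `P₁` are the (unnormalised)
joint laws of the features and the labels `0`, `1`. -/
def classRisk (P0 P1 : Measure γ) (S : Set γ) : ℝ≥0∞ := P0 S + P1 Sᶜ

/-- `G` is the log-likelihood ratio `log (dP₁/dP₀)`, encoded by the comparisons of `P₀` and `P₁`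
it yields on its superlevel and sublevel sets. -/
def IsLogLikelihoodRatio (P0 P1 : Measure γ) (G : γ → ℝ) : Prop :=
  ∀ (s : ℝ) (C : Set γ),
    (C ⊆ {x | -s ≤ G x} → P0 C ≤ ENNReal.ofReal (Real.exp s) * P1 C) ∧
    (C ⊆ {x | G x ≤ s} → P1 C ≤ ENNReal.ofReal (Real.exp s) * P0 C)

lemma classRisk_le_add_of_disagreement {S T : Set γ} (hS : MeasurableSet S)
    (hT : MeasurableSet T) {c : ℝ≥0∞}
    (h : P0 (S \ T) + P1 (T \ S) ≤ c + (P1 (S \ T) + P0 (T \ S))) :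
    classRisk P0 P1 S ≤ c + classRisk P0 P1 T := by
  have hSc : Sᶜ ∩ T = T \ S := by rw [inter_comm, sdiff_eq]
  have hTc : Tᶜ ∩ S = S \ T := by rw [inter_comm, sdiff_eq]
  have hU : Sᶜ \ T = Tᶜ \ S := by rw [sdiff_eq, sdiff_eq, inter_comm]
  unfold classRisk
  rw [← measure_inter_add_sdiff S hT, ← measure_inter_add_sdiff Sᶜ hT,
    ← measure_inter_add_sdiff T hS, ← measure_inter_add_sdiff Tᶜ hS, inter_comm S T, hSc, hTc, hU]
  calc P0 (T ∩ S) + P0 (S \ T) + (P1 (T \ S) + P1 (Tᶜ \ S))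
      = P0 (T ∩ S) + P1 (Tᶜ \ S) + (P0 (S \ T) + P1 (T \ S)) := by ring
    _ ≤ P0 (T ∩ S) + P1 (Tᶜ \ S) + (c + (P1 (S \ T) + P0 (T \ S))) := by gcongr
    _ = c + (P0 (T ∩ S) + P0 (T \ S) + (P1 (S \ T) + P1 (Tᶜ \ S))) := by ring

lemma measure_le_add_of_sdiff_le_ofReal_exp_mul {ρ ρ' : Measure γ} {D F I : Set γ} {t : ℝ}
    (ht : 0 ≤ t) (hF : MeasurableSet F) (hDI : D \ F ⊆ I)
    (h : ρ (D \ F) ≤ ENNReal.ofReal (Real.exp t) * ρ' (D \ F)) :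
    ρ D ≤ ρ F + ENNReal.ofReal t * ρ I + ρ' D := by
  rw [← measure_inter_add_sdiff D hF, add_assoc]
  gcongr
  · exact inter_subset_right
  · calc ρ (D \ F) ≤ ENNReal.ofReal t * ρ I + ρ' (D \ F) :=
          ENNReal.le_ofReal_mul_add_of_le_ofReal_exp_mul ht h (measure_mono hDI)
      _ ≤ ENNReal.ofReal t * ρ I + ρ' D := by gcongr; exact sdiff_subset

lemma classRisk_bayes_le (hG : Measurable G) (hLLR : IsLogLikelihoodRatio P0 P1 G)
    {S : Set γ} (hS : MeasurableSet S) :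
    classRisk P0 P1 {x | 0 ≤ G x} ≤ classRisk P0 P1 S := by
  have hB : MeasurableSet {x | 0 ≤ G x} := measurableSet_le measurable_const hG
  have h01 : P0 ({x | 0 ≤ G x} \ S) ≤ P1 ({x | 0 ≤ G x} \ S) := by
    simpa using (hLLR 0 _).1 fun x hx => by simpa using hx.1
  have h10 : P1 (S \ {x | 0 ≤ G x}) ≤ P0 (S \ {x | 0 ≤ G x}) := by
    simpa using (hLLR 0 _).2 fun x hx => show G x ≤ 0 from (not_le.mp hx.2).le
  simpa using classRisk_le_add_of_disagreement hB hS (c := 0) (by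
    rw [zero_add]
    exact add_le_add h01 h10)

lemma classRisk_le_add_classRisk_bayes (hG : Measurable G) {Λ : γ → ℝ} (hΛ : Measurable Λ)
    {t : ℝ} (ht : 0 ≤ t) (hLLR : IsLogLikelihoodRatio P0 P1 G) :
    classRisk P0 P1 {x | 0 ≤ Λ x}
      ≤ P0 {x | t < |Λ x - G x|} + P1 {x | t < |Λ x - G x|}
        + ENNReal.ofReal t * P0 {x | -t ≤ G x ∧ G x < 0}
        + ENNReal.ofReal t * P1 {x | 0 ≤ G x ∧ G x ≤ t}
        + classRisk P0 P1 {x | 0 ≤ G x} := by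
  set L := {x | 0 ≤ Λ x}
  set B := {x | 0 ≤ G x}
  set F := {x | t < |Λ x - G x|}
  have hF : MeasurableSet F := measurableSet_lt measurable_const (hΛ.sub hG).abs
  have hclose : ∀ x ∉ F, -t ≤ Λ x - G x ∧ Λ x - G x ≤ t := fun x hx => abs_le.mp (not_lt.mp hx)
  have hI0 : (L \ B) \ F ⊆ {x | -t ≤ G x ∧ G x < 0} := by
    rintro x ⟨⟨hΛx : 0 ≤ Λ x, hGx : ¬0 ≤ G x⟩, hFx⟩
    exact ⟨by linarith [hclose x hFx], not_le.mp hGx⟩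
  have hI1 : (B \ L) \ F ⊆ {x | 0 ≤ G x ∧ G x ≤ t} := by
    rintro x ⟨⟨hGx : 0 ≤ G x, hΛx : ¬0 ≤ Λ x⟩, hFx⟩
    exact ⟨hGx, by linarith [hclose x hFx]⟩
  have h0 := measure_le_add_of_sdiff_le_ofReal_exp_mul ht hF hI0
    ((hLLR t _).1 fun x hx => (hI0 hx).1)
  have h1 := measure_le_add_of_sdiff_le_ofReal_exp_mul ht hF hI1
    ((hLLR t _).2 fun x hx => (hI1 hx).2)
  refine classRisk_le_add_of_disagreement (measurableSet_le measurable_const hΛ)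
    (measurableSet_le measurable_const hG) ?_
  calc P0 (L \ B) + P1 (B \ L) ≤ _ := add_le_add h0 h1
    _ = _ := by ring

end Classification

section Densities

variable {α β : Type*} [MeasurableSpace α] [MeasurableSpace β] {m : Measure α} [SFinite m]
  {ν : Measure β} [SFinite ν]

lemma prod_withDensity_apply_le {g g' : α → ℝ≥0∞} {T : Set α} (hT : MeasurableSet T)
    {c : ℝ≥0∞} (hc : c ≠ ∞) (hg : ∀ z ∈ T, g z ≤ c * g' z) {C : Set (α × β)}
    (hCT : C ⊆ T ×ˢ univ) :
    (m.withDensity g).prod ν C ≤ c * (m.withDensity g').prod ν C := by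
  have hrestrict : ∀ g : α → ℝ≥0∞,
      (m.withDensity g).prod ν C = ((m.restrict T).withDensity g).prod ν C := by
    intro g
    rw [← restrict_withDensity hT, ← Measure.restrict_univ (μ := ν), Measure.prod_restrict,
      Measure.restrict_eq_self _ hCT, Measure.restrict_univ]
  have hle : ((m.restrict T).withDensity g).prod ν
      ≤ c • ((m.restrict T).withDensity g').prod ν := by
    rw [← Measure.prod_smul_left, ← withDensity_smul' c g' hc]
    gcongr
    exact withDensity_mono (ae_restrict_of_forall_mem hT hg)
  rw [hrestrict, hrestrict]
  exact hle C

lemma prod_withDensity_apply_le_exp_mul_of_neg_le_log {a b : α → ℝ} (ha : Measurable a)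
    (hb : Measurable b) (ha_pos : ∀ z, 0 < a z) (hb_pos : ∀ z, 0 < b z) (s : ℝ)
    {C : Set (α × β)} (hC : C ⊆ {x | -s ≤ Real.log (b x.1 / a x.1)}) :
    (m.withDensity fun z => ENNReal.ofReal (a z)).prod ν C
      ≤ ENNReal.ofReal (Real.exp s) * (m.withDensity fun z => ENNReal.ofReal (b z)).prod ν C := by
  refine prod_withDensity_apply_le (T := {z | -s ≤ Real.log (b z / a z)})
    (measurableSet_le measurable_const (by fun_prop)) ENNReal.ofReal_ne_top ?_
    fun x hx => ⟨hC hx, mem_univ _⟩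
  intro z hz
  rw [← ENNReal.ofReal_mul (Real.exp_pos s).le]
  exact ENNReal.ofReal_le_ofReal (Real.le_exp_mul_of_neg_le_log_div (ha_pos z) (hb_pos z) hz)

lemma isLogLikelihoodRatio_prod_withDensity {a b G : α → ℝ} (ha : Measurable a)
    (hb : Measurable b) (ha_pos : ∀ z, 0 < a z) (hb_pos : ∀ z, 0 < b z)
    (hG : ∀ z, G z = Real.log (b z / a z)) :
    IsLogLikelihoodRatio ((m.withDensity fun z => ENNReal.ofReal (a z)).prod ν)
      ((m.withDensity fun z => ENNReal.ofReal (b z)).prod ν) (fun x => G x.1) := by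
  obtain rfl : G = fun z => Real.log (b z / a z) := funext hG
  refine fun s C => ⟨prod_withDensity_apply_le_exp_mul_of_neg_le_log ha hb ha_pos hb_pos s,
    fun hC => prod_withDensity_apply_le_exp_mul_of_neg_le_log hb ha hb_pos ha_pos s ?_⟩
  intro x hx
  have : Real.log (b x.1 / a x.1) ≤ s := hC hx
  show -s ≤ Real.log (a x.1 / b x.1)
  rw [← inv_div, Real.log_inv]
  linarith

end Densities

lemma MeasureTheory.Measure.restrict_eq_measure_smul_cond {Ω : Type*} [MeasurableSpace Ω]
    (μ : Measure Ω) [IsFiniteMeasure μ] (s : Set Ω) : μ.restrict s = μ s • μ[|s] := by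
  by_cases hs : μ s = 0
  · simp [hs]
  · rw [ProbabilityTheory.cond, smul_smul, ENNReal.mul_inv_cancel hs (measure_ne_top μ s),
      one_smul]

section LabelledSample

variable {Ω α β γ : Type*} [MeasurableSpace Ω] [MeasurableSpace α] [MeasurableSpace β]
  [MeasurableSpace γ] {μ : Measure Ω} {Y : Ω → Bool}

lemma restrict_label_false_add_restrict_label_true (hY : Measurable Y) :
    μ.restrict {ω | Y ω = false} + μ.restrict {ω | Y ω = true} = μ := by
  have hcompl : {ω | Y ω = true} = {ω | Y ω = false}ᶜ := by ext; simp
  exact hcompl ▸ Measure.restrict_add_restrict_compl (hY (measurableSet_singleton false))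

lemma measure_preimage_eq_map_restrict_label_add (hY : Measurable Y) {V : Ω → γ}
    (hV : Measurable V) {F : Set γ} (hF : MeasurableSet F) :
    μ (V ⁻¹' F) = (μ.restrict {ω | Y ω = false}).map V F
      + (μ.restrict {ω | Y ω = true}).map V F := by
  rw [← Measure.add_apply, ← Measure.map_add _ _ hV,
    restrict_label_false_add_restrict_label_true hY, Measure.map_apply hV hF]

lemma measure_ne_label_eq_classRisk (hY : Measurable Y) {V : Ω → γ} (hV : Measurable V)
    {S : Set γ} (hS : MeasurableSet S) :
    μ {ω | (V ω ∈ S) ≠ (Y ω = true)}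
      = classRisk ((μ.restrict {ω | Y ω = false}).map V)
          ((μ.restrict {ω | Y ω = true}).map V) S := by
  have hon : ∀ (b : Bool) (A : Set Ω), (∀ ω, Y ω = b → (ω ∈ A ↔ (V ω ∈ S) ≠ (Y ω = true))) →
      μ.restrict {ω | Y ω = b} {ω | (V ω ∈ S) ≠ (Y ω = true)} = μ.restrict {ω | Y ω = b} A := by
    intro b A hA
    refine measure_congr ((ae_restrict_mem (hY (measurableSet_singleton b))).mono fun ω hω => ?_)
    exact propext (hA ω hω).symm
  conv_lhs => rw [← restrict_label_false_add_restrict_label_true hY (μ := μ)]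
  rw [classRisk, Measure.map_apply hV hS, Measure.map_apply hV hS.compl, Measure.add_apply,
    hon false (V ⁻¹' S) fun ω hω => by simp [hω], hon true (V ⁻¹' Sᶜ) fun ω hω => by simp [hω]]

lemma measure_ne_label_le_of_isLogLikelihoodRatio (hY : Measurable Y) {V : Ω → γ}
    (hV : Measurable V) {G Λ : γ → ℝ} (hG : Measurable G) (hΛ : Measurable Λ) {t : ℝ}
    (ht : 0 ≤ t)
    (hLLR : IsLogLikelihoodRatio ((μ.restrict {ω | Y ω = false}).map V)
      ((μ.restrict {ω | Y ω = true}).map V) G)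
    {S : Set γ} (hS : MeasurableSet S) :
    μ {ω | (0 ≤ Λ (V ω)) ≠ (Y ω = true)}
      ≤ μ (V ⁻¹' {x | t < |Λ x - G x|})
        + ENNReal.ofReal t * μ.restrict {ω | Y ω = false} (V ⁻¹' {x | -t ≤ G x ∧ G x < 0})
        + ENNReal.ofReal t * μ.restrict {ω | Y ω = true} (V ⁻¹' {x | 0 ≤ G x ∧ G x ≤ t})
        + μ {ω | (V ω ∈ S) ≠ (Y ω = true)} := by
  have hF : MeasurableSet {x | t < |Λ x - G x|} :=
    measurableSet_lt measurable_const (hΛ.sub hG).abs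
  have hI0 : MeasurableSet {x | -t ≤ G x ∧ G x < 0} :=
    (measurableSet_le measurable_const hG).inter (measurableSet_lt hG measurable_const)
  have hI1 : MeasurableSet {x | 0 ≤ G x ∧ G x ≤ t} :=
    (measurableSet_le measurable_const hG).inter (measurableSet_le hG measurable_const)
  refine (measure_ne_label_eq_classRisk hY hV (measurableSet_le measurable_const hΛ)).trans_le ?_
  rw [measure_ne_label_eq_classRisk hY hV hS, measure_preimage_eq_map_restrict_label_add hY hV hF,
    ← Measure.map_apply hV hI0, ← Measure.map_apply hV hI1]
  exact (classRisk_le_add_classRisk_bayes hG hΛ ht hLLR).trans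
    (add_le_add le_rfl (classRisk_bayes_le hG hLLR hS))

lemma map_pair_restrict_label_eq_prod [IsFiniteMeasure μ] {Z : Ω → α} {W : Ω → β}
    (hZ : Measurable Z) (hW : Measurable W) (hindep : IndepFun (fun ω => (Z ω, Y ω)) W μ)
    (b : Bool) :
    (μ.restrict {ω | Y ω = b}).map (fun ω => (Z ω, W ω))
      = ((μ.restrict {ω | Y ω = b}).map Z).prod (μ.map W) := by
  refine (Measure.prod_eq fun S T hS hT => ?_).symm
  have hpre : {ω | Y ω = b} ∩ Z ⁻¹' S = (fun ω => (Z ω, Y ω)) ⁻¹' (S ×ˢ {b}) := by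
    ext ω; simp [and_comm]
  rw [Measure.map_apply (hZ.prodMk hW) (hS.prod hT), Measure.map_apply hZ hS,
    Measure.map_apply hW hT, Measure.restrict_apply (hZ hS),
    Measure.restrict_apply ((hZ.prodMk hW) (hS.prod hT)), mk_preimage_prod, inter_comm,
    ← inter_assoc, hpre, inter_comm _ {ω | Y ω = b}, hpre]
  exact hindep.measure_inter_preimage_eq_mul _ _ (hS.prod (measurableSet_singleton b)) hT

lemma map_restrict_eq_withDensity_ofReal_mul [IsFiniteMeasure μ] {Z : Ω → α}
    {s : Set Ω} {π : ℝ} (hπ : 0 ≤ π) (hs : μ s = ENNReal.ofReal π) {m : Measure α} {f : α → ℝ}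
    (hlaw : (μ[|s]).map Z = m.withDensity fun z => ENNReal.ofReal (f z)) :
    (μ.restrict s).map Z = m.withDensity fun z => ENNReal.ofReal (π * f z) := by
  rw [μ.restrict_eq_measure_smul_cond s, Measure.map_smul, hlaw, hs,
    ← withDensity_smul' _ _ ENNReal.ofReal_ne_top]
  congr 1
  funext z
  simp [ENNReal.ofReal_mul hπ]

lemma ofReal_mul_cond_apply_eq [IsFiniteMeasure μ] {s : Set Ω} {π t : ℝ} (ht : 0 ≤ t)
    (hs : μ s = ENNReal.ofReal π) (E : Set Ω) :
    ENNReal.ofReal (t * π) * μ[|s] E = ENNReal.ofReal t * μ.restrict s E := by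
  rw [μ.restrict_eq_measure_smul_cond, Measure.smul_apply, hs, smul_eq_mul,
    ENNReal.ofReal_mul ht, mul_assoc]

end LabelledSample

theorem stmt14_general {Ω : Type*} [MeasurableSpace Ω] (μ : Measure Ω) [IsProbabilityMeasure μ]
    {p K : ℕ} (Z : Ω → Fin K → ℝ) (Y : Ω → Bool) (W : Ω → Fin p → ℝ)
    (hZ : Measurable Z) (hY : Measurable Y) (hW : Measurable W)
    (A : Matrix (Fin p) (Fin K) ℝ) (X : Ω → Fin p → ℝ)
    (hX : ∀ ω, X ω = A.mulVec (Z ω) + W ω)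
    (hindep : IndepFun (fun ω => (Z ω, Y ω)) W μ)
    (SZY : Matrix (Fin K) (Fin K) ℝ) (hZY : SZY.PosDef)
    (α0 α1 : Fin K → ℝ)
    (π0 π1 : ℝ) (h0 : 0 < π0) (h1 : 0 < π1)
    (hY0 : μ {ω | Y ω = false} = ENNReal.ofReal π0)
    (hY1 : μ {ω | Y ω = true} = ENNReal.ofReal π1)
    (hlaw0 : Measure.map Z (μ[|{ω | Y ω = false}])
      = volume.withDensity (fun z => ENNReal.ofReal (mvGaussDensity α0 SZY z)))
    (hlaw1 : Measure.map Z (μ[|{ω | Y ω = true}])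
      = volume.withDensity (fun z => ENNReal.ofReal (mvGaussDensity α1 SZY z)))
    (G : (Fin K → ℝ) → ℝ)
    (hG : ∀ z, G z = Real.log ((π1 * mvGaussDensity α1 SZY z)
        / (π0 * mvGaussDensity α0 SZY z)))
    (Lam : (Fin p → ℝ) → ℝ) (hLam : Measurable Lam)
    (t : ℝ) (ht : 0 < t) :
    μ {ω | (0 ≤ Lam (X ω)) ≠ (Y ω = true)}
        - (⨅ h : {h : (Fin K → ℝ) → Bool // Measurable h}, μ {ω | h.1 (Z ω) ≠ Y ω})
      ≤ μ {ω | t < |Lam (X ω) - G (Z ω)|}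
        + ENNReal.ofReal (t * π0)
            * (μ[|{ω | Y ω = false}]) {ω | -t ≤ G (Z ω) ∧ G (Z ω) < 0}
        + ENNReal.ofReal (t * π1)
            * (μ[|{ω | Y ω = true}]) {ω | 0 ≤ G (Z ω) ∧ G (Z ω) ≤ t} := by
  obtain rfl : X = fun ω => A *ᵥ Z ω + W ω := funext hX
  have hLLR : IsLogLikelihoodRatio ((μ.restrict {ω | Y ω = false}).map fun ω => (Z ω, W ω))
      ((μ.restrict {ω | Y ω = true}).map fun ω => (Z ω, W ω)) (fun x => G x.1) := by
    rw [map_pair_restrict_label_eq_prod hZ hW hindep,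
      map_pair_restrict_label_eq_prod hZ hW hindep,
      map_restrict_eq_withDensity_ofReal_mul h0.le hY0 hlaw0,
      map_restrict_eq_withDensity_ofReal_mul h1.le hY1 hlaw1]
    exact isLogLikelihoodRatio_prod_withDensity (by fun_prop) (by fun_prop)
      (fun z => mul_pos h0 (mvGaussDensity_pos α0 hZY z))
      (fun z => mul_pos h1 (mvGaussDensity_pos α1 hZY z)) hG
  have hGm : Measurable G := by
    rw [show G = _ from funext hG]
    fun_prop
  rw [ofReal_mul_cond_apply_eq ht.le hY0, ofReal_mul_cond_apply_eq ht.le hY1, tsub_le_iff_right,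
    ENNReal.add_iInf]
  refine le_iInf fun h => (measure_ne_label_le_of_isLogLikelihoodRatio hY (hZ.prodMk hW)
    (by fun_prop) (by fun_prop : Measurable fun x => Lam (A *ᵥ x.1 + x.2)) ht.le hLLR
    ((h.2 (measurableSet_singleton true)).preimage measurable_fst)).trans_eq ?_
  congr 2
  ext ω
  cases h.1 (Z ω) <;> cases Y ω <;> simp

/-- Surrogate risk bound: for any measurable `Λ̂ : ℝ^p → ℝ` and the classifier
`ĝ(x) = 1{Λ̂(x) ≥ 0}`, for every `t > 0`,
`P{ĝ(X) ≠ Y} - R_z^* ≤ P{|Λ̂(X) - G_z^*(Z)| > t} + t π0 P{-t ≤ G_z^*(Z) < 0 ∣ Y=0}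
  + t π1 P{0 ≤ G_z^*(Z) ≤ t ∣ Y=1}`. -/
theorem stmt14 {Ω : Type*} [MeasurableSpace Ω] (μ : Measure Ω) [IsProbabilityMeasure μ]
    {p K : ℕ} (Z : Ω → Fin K → ℝ) (Y : Ω → Bool) (W : Ω → Fin p → ℝ)
    (hZ : Measurable Z) (hY : Measurable Y) (hW : Measurable W)
    (A : Matrix (Fin p) (Fin K) ℝ) (X : Ω → Fin p → ℝ)
    (hX : ∀ ω, X ω = A.mulVec (Z ω) + W ω)
    (hindep : IndepFun (fun ω => (Z ω, Y ω)) W μ)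
    (SZY : Matrix (Fin K) (Fin K) ℝ) (hZY : SZY.PosDef)
    (α0 α1 : Fin K → ℝ)
    (π0 π1 : ℝ) (h0 : 0 < π0) (h1 : 0 < π1) (hsum : π0 + π1 = 1)
    (hY0 : μ {ω | Y ω = false} = ENNReal.ofReal π0)
    (hY1 : μ {ω | Y ω = true} = ENNReal.ofReal π1)
    (hlaw0 : Measure.map Z (μ[|{ω | Y ω = false}])
      = volume.withDensity (fun z => ENNReal.ofReal (mvGaussDensity α0 SZY z)))
    (hlaw1 : Measure.map Z (μ[|{ω | Y ω = true}])
      = volume.withDensity (fun z => ENNReal.ofReal (mvGaussDensity α1 SZY z)))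
    (G : (Fin K → ℝ) → ℝ)
    (hG : ∀ z, G z = Real.log ((π1 * mvGaussDensity α1 SZY z)
        / (π0 * mvGaussDensity α0 SZY z)))
    (Lam : (Fin p → ℝ) → ℝ) (hLam : Measurable Lam)
    (t : ℝ) (ht : 0 < t) :
    μ {ω | (0 ≤ Lam (X ω)) ≠ (Y ω = true)}
        - (⨅ h : {h : (Fin K → ℝ) → Bool // Measurable h}, μ {ω | h.1 (Z ω) ≠ Y ω})
      ≤ μ {ω | t < |Lam (X ω) - G (Z ω)|}
        + ENNReal.ofReal (t * π0)
            * (μ[|{ω | Y ω = false}]) {ω | -t ≤ G (Z ω) ∧ G (Z ω) < 0}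
        + ENNReal.ofReal (t * π1)
            * (μ[|{ω | Y ω = true}]) {ω | 0 ≤ G (Z ω) ∧ G (Z ω) ≤ t} :=
  stmt14_general μ Z Y W hZ hY hW A X hX hindep SZY hZY α0 α1 π0 π1 h0 h1 hY0 hY1 hlaw0 hlaw1 G hG
    Lam hLam t ht
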